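/- arXiv:1311.4683 — 3 statements merged into one kernel-verified Lean document; each statement's English description precedes it below -/
import Mathlib

section
/- Let K be a field with char K ≠ 2, let K(x) be the rational function field, let a ∈ K be nonzero, and set t = x + a²/x. Then the integral closure of K[t] in K(x) is the Laurent polynomial ring K[x, x⁻¹]. -/
open Multiplicative

/-- The value group `ℤᵐ⁰ = WithZero (Multiplicative ℤ)` of a normalized discrete valuation. -/
abbrev Zm0 : Type := WithZero (Multiplicative ℤ)

/-- A place of an algebraic function field `F/K`, given by its associated normalized
(i.e. surjective) discrete valuation `v : F → ℤᵐ⁰`, which is trivial on the constants `K`.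
An element `f` has a zero of order `n` at the place iff `v f = ofAdd (-n)`, and a pole
iff `1 < v f`. -/
def IsFnPlace (K : Type*) {F : Type*} [Field K] [Field F] [Algebra K F]
    (v : Valuation F Zm0) : Prop :=
  Function.Surjective v ∧ ∀ c : K, c ≠ 0 → v (algebraMap K F c) = 1

/-- The place `w` of `F'` lies over the place `v` of `F` (along the embedding `f : F →+* F'`)
with ramification index `e`. -/
def PlaceLiesOver {F F' : Type*} [Field F] [Field F'] (f : F →+* F')
    (v : Valuation F Zm0) (w : Valuation F' Zm0) (e : ℕ) : Prop :=
  ∀ y : F, w (f y) = (v y) ^ e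

/-- The place `v` of `F` is unramified in the extension `F'` (given by `f : F →+* F'`):
every place of `F'` lying above it has ramification index `1`. -/
def UnramifiedIn (K : Type*) {F F' : Type*} [Field K] [Field F] [Field F']
    [Algebra K F'] (f : F →+* F') (v : Valuation F Zm0) : Prop :=
  ∀ (w : Valuation F' Zm0) (e : ℕ), IsFnPlace K w → PlaceLiesOver f v w e → e = 1

/-- `F/K` is an algebraic function field of one variable: there is an element `t`,
transcendental over `K`, such that `F` is a finite extension of `K(t)`. -/
def IsAlgFunctionField (K F : Type*) [Field K] [Field F] [Algebra K F] : Prop :=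
  ∃ t : F, Transcendental K t ∧ FiniteDimensional ↥(IntermediateField.adjoin K {t}) F

/-- `K` is the full constant field of `F/K`: every element of `F` algebraic over `K`
lies in `K`. -/
def IsFullConstantField (K F : Type*) [Field K] [Field F] [Algebra K F] : Prop :=
  ∀ z : F, IsAlgebraic K z → z ∈ (algebraMap K F).range

/-- `t` is a separating element of `F/K`: `F` is finite and separable over `K(t)`. -/
def IsSeparatingElement (K : Type*) {F : Type*} [Field K] [Field F] [Algebra K F]
    (t : F) : Prop :=
  Transcendental K t ∧ FiniteDimensional ↥(IntermediateField.adjoin K {t}) F ∧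
    Algebra.IsSeparable ↥(IntermediateField.adjoin K {t}) F

/-- The ring of `S`-integers of `F/K`: the elements of `F` with no poles outside `S`,
i.e. the intersection of the valuation rings at all places outside `S`. -/
def SInt (K : Type*) {F : Type*} [Field K] [Field F] [Algebra K F]
    (S : Set (Valuation F Zm0)) : Subring F :=
  ⨅ (v : Valuation F Zm0) (_ : IsFnPlace K v) (_ : v ∉ S), v.valuationSubring.toSubring

/-!
`K[x, x⁻¹]` is the localization of the integrally closed domain `K[x]` at `x`, so it is integrally
closed in its fraction field `K(x)`; since it contains `t`, it contains the integral closure of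
`K[t]`. Conversely, `x` is a root of `Y² - tY + a²` and `x⁻¹ = a⁻²(t - x)`, so `x` and `x⁻¹` are
integral over `K[t]`.
-/

open scoped Polynomial nonZeroDivisors

section Quadratic

variable {K F : Type*} [Field K] [Field F] [Algebra K F]

theorem isIntegral_adjoin_add_div {x : F} (hx : x ≠ 0) (c : K) :
    IsIntegral (Algebra.adjoin K {x + algebraMap K F c / x}) x := by
  set t := x + algebraMap K F c / x
  let T : Algebra.adjoin K {t} := ⟨t, Algebra.self_mem_adjoin_singleton K t⟩
  refine ⟨.X ^ 2 - .C T * .X + .C (algebraMap K _ c), by monicity!, ?_⟩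
  simp only [Polynomial.eval₂_add, Polynomial.eval₂_sub, Polynomial.eval₂_mul,
    Polynomial.eval₂_pow, Polynomial.eval₂_X, Polynomial.eval₂_C]
  show x ^ 2 - t * x + algebraMap K F c = 0
  simp only [t]
  field_simp
  ring

theorem isIntegral_inv_adjoin_add_div {x : F} (hx : x ≠ 0) {c : K} (hc : c ≠ 0) :
    IsIntegral (Algebra.adjoin K {x + algebraMap K F c / x}) x⁻¹ := by
  set t := x + algebraMap K F c / x
  have hinv : x⁻¹ = c⁻¹ • (t - x) := by
    have hc' : algebraMap K F c ≠ 0 := (map_ne_zero _).mpr hc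
    rw [Algebra.smul_def, map_inv₀]
    simp only [t]
    field_simp
    ring
  let T : Algebra.adjoin K {t} := ⟨t, Algebra.self_mem_adjoin_singleton K t⟩
  have ht : IsIntegral (Algebra.adjoin K {t}) t := isIntegral_algebraMap (x := T)
  rw [hinv]
  exact (ht.sub (isIntegral_adjoin_add_div hx c)).smul c⁻¹

end Quadratic

theorem Polynomial.powers_X_le_nonZeroDivisors (R : Type*) [Semiring R] [NoZeroDivisors R]
    [Nontrivial R] : Submonoid.powers (X : R[X]) ≤ R[X]⁰ :=
  powers_le_nonZeroDivisors_of_noZeroDivisors X_ne_zero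

namespace RatFunc

variable (K : Type*) [Field K]

noncomputable def laurentSubalgebra : Subalgebra K[X] (RatFunc K) :=
  Localization.subalgebra.ofField (RatFunc K) _ (Polynomial.powers_X_le_nonZeroDivisors K)

instance : IsLocalization.Away (Polynomial.X : K[X]) (laurentSubalgebra K) :=
  Localization.subalgebra.isLocalization_ofField _ _ _

instance : IsIntegrallyClosed (laurentSubalgebra K) :=
  isIntegrallyClosed_of_isLocalization _ (Submonoid.powers Polynomial.X)
    (Polynomial.powers_X_le_nonZeroDivisors K)

variable {K}

theorem algebraMap_mem_adjoin_X_X_inv (p : K[X]) :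
    algebraMap K[X] (RatFunc K) p ∈ Algebra.adjoin K {X, X⁻¹} := by
  rw [← aeval_X_left_eq_algebraMap]
  exact Algebra.adjoin_mono (by simp) (Polynomial.aeval_mem_adjoin_singleton K X)

theorem restrictScalars_laurentSubalgebra :
    (laurentSubalgebra K).restrictScalars K = Algebra.adjoin K {X, X⁻¹} := by
  refine le_antisymm ?_ (Algebra.adjoin_le ?_)
  · rintro _ ⟨p, _, ⟨n, rfl⟩, rfl⟩
    refine mul_mem (algebraMap_mem_adjoin_X_X_inv p) ?_
    rw [map_pow, algebraMap_X, ← inv_pow]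
    exact pow_mem (Algebra.subset_adjoin (by simp)) n
  · rintro _ (rfl | rfl)
    · exact ⟨Polynomial.X, 1, ⟨0, pow_zero _⟩, by simp⟩
    · exact ⟨1, Polynomial.X, ⟨1, pow_one _⟩, by simp⟩

theorem mem_laurentSubalgebra_of_isIntegral {z : RatFunc K}
    (hz : IsIntegral (laurentSubalgebra K) z) : z ∈ laurentSubalgebra K := by
  obtain ⟨y, rfl⟩ := IsIntegrallyClosed.isIntegral_iff.mp hz
  exact y.2

end RatFunc

theorem stmt_0_general {K : Type*} [Field K] (a : K) (ha : a ≠ 0)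
    (t : RatFunc K)
    (ht : t = RatFunc.X + (algebraMap K (RatFunc K) a) ^ 2 / RatFunc.X) :
    (integralClosure ↥(Algebra.adjoin K ({t} : Set (RatFunc K))) (RatFunc K) : Set (RatFunc K)) =
      ↑(Algebra.adjoin K ({RatFunc.X, (RatFunc.X)⁻¹} : Set (RatFunc K))) := by
  rw [← map_pow] at ht
  have hX : IsIntegral (Algebra.adjoin K {t}) RatFunc.X :=
    ht ▸ isIntegral_adjoin_add_div RatFunc.X_ne_zero (a ^ 2)
  have hXinv : IsIntegral (Algebra.adjoin K {t}) RatFunc.X⁻¹ :=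
    ht ▸ isIntegral_inv_adjoin_add_div RatFunc.X_ne_zero (pow_ne_zero 2 ha)
  have htL : Algebra.adjoin K {t} ≤ (RatFunc.laurentSubalgebra K).restrictScalars K := by
    rw [RatFunc.restrictScalars_laurentSubalgebra, Algebra.adjoin_le_iff,
      Set.singleton_subset_iff, ht, div_eq_mul_inv]
    exact add_mem (Algebra.subset_adjoin (by simp))
      (mul_mem (Subalgebra.algebraMap_mem _ _) (Algebra.subset_adjoin (by simp)))
  rw [← RatFunc.restrictScalars_laurentSubalgebra]
  refine Set.Subset.antisymm (fun z hz => ?_) ?_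
  · exact RatFunc.mem_laurentSubalgebra_of_isIntegral
      ((show IsIntegral _ z from hz).map_of_comp_eq (Subalgebra.inclusion htL).toRingHom
        (RingHom.id _) rfl)
  · rw [RatFunc.restrictScalars_laurentSubalgebra]
    exact Algebra.adjoin_le (S := (integralClosure (Algebra.adjoin K {t}) _).restrictScalars K)
      (by rintro _ (rfl | rfl); exacts [hX, hXinv])

/-- the integral closure of `K[t]`, `t = x + a²/x`, in `K(x)` is the Laurent
polynomial ring `K[x, x⁻¹]`. -/
theorem stmt_0 {K : Type*} [Field K] (h2 : ringChar K ≠ 2) (a : K) (ha : a ≠ 0)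
    (t : RatFunc K)
    (ht : t = RatFunc.X + (algebraMap K (RatFunc K) a) ^ 2 / RatFunc.X) :
    (integralClosure ↥(Algebra.adjoin K ({t} : Set (RatFunc K))) (RatFunc K) : Set (RatFunc K)) =
      ↑(Algebra.adjoin K ({RatFunc.X, (RatFunc.X)⁻¹} : Set (RatFunc K))) :=
  stmt_0_general a ha t ht
end

section
/- Let F/K be an algebraic function field with perfect constant field K, F'/F a finite separable extension with F' = F(x), S a set of places of F/K, and x integral over the S-integer ring O_S. If O_P[x] is integrally closed for every place P ∉ S (where O_P is the valuation ring of P), then O_S[x] is integrally closed in F'. -/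
open Multiplicative

/-
Write `z = p(x)` with `p ∈ F[X]` and let `r = p mod μ`, where `μ` is the minimal polynomial of `x`
over `F`. At a place `P ∉ S` the valuation ring `O_P` is integrally closed with fraction field `F`,
so `μ` has coefficients in `O_P`. Since `z ∈ O_P[x]`, reducing an `O_P`-polynomial representing
`z` modulo `μ` gives a polynomial of degree `< deg μ` with coefficients in `O_P` and value `z` at
`x`; by uniqueness of the remainder it is `r`. So the coefficients of `r` lie in every `O_P` with
`P ∉ S`, i.e. in `O_S`, and `z = r(x) ∈ O_S[x]`.
-/
open Polynomial

theorem isIntegral_of_isIntegral_map {F L : Type*} [Field F] [CommRing L] [Nontrivial L]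
    [Algebra F L] {A : Subring F} {x : L} (hx : IsIntegral (A.map (algebraMap F L)) x) :
    IsIntegral A x := by
  let e := A.equivMapOfInjective _ (algebraMap F L).injective
  refine (RingEquiv.isIntegral_iff e.symm (RingHom.ext fun t => ?_) x).1 hx
  exact congrArg Subtype.val (e.apply_symm_apply t)

theorem IsIntegral.of_le_valuationSubring {F L : Type*} [Field F] [CommRing L] [Algebra F L]
    {A : Subring F} {O : ValuationSubring F} (h : A ≤ O.toSubring) {x : L}
    (hx : IsIntegral A x) : IsIntegral O x :=
  hx.map_of_comp_eq (Subring.inclusion h) (RingHom.id L) rfl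

theorem IsIntegral.of_subring_le {L : Type*} [CommRing L] {A B : Subring L} (h : A ≤ B) {x : L}
    (hx : IsIntegral A x) : IsIntegral B x :=
  hx.map_of_comp_eq (Subring.inclusion h) (RingHom.id L) rfl

theorem mem_closure_image_union_singleton_iff {R F L : Type*} [CommRing R] [CommRing F]
    [CommRing L] [Algebra R F] [Algebra F L] [Algebra R L] [IsScalarTower R F L] {A : Set F}
    (hA : Set.range (algebraMap R F) = A) {x z : L} :
    z ∈ Subring.closure (algebraMap F L '' A ∪ {x}) ↔ z ∈ Algebra.adjoin R {x} := by
  rw [Algebra.mem_adjoin_iff, ← hA, ← Set.range_comp, ← RingHom.coe_comp,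
    ← IsScalarTower.algebraMap_eq]

theorem modByMonic_minpoly_mem_lifts {R K L : Type*} [CommRing R] [IsDomain R]
    [IsIntegrallyClosed R] [Field K] [Algebra R K] [IsFractionRing R K] [CommRing L] [IsDomain L]
    [Algebra K L] [Algebra R L] [IsScalarTower R K L] {x : L} (hx : IsIntegral R x) {p : K[X]}
    (hp : aeval x p ∈ Algebra.adjoin R {x}) : p %ₘ minpoly K x ∈ lifts (algebraMap R K) := by
  rw [Algebra.adjoin_singleton_eq_range_aeval] at hp
  obtain ⟨q, hq : aeval x q = aeval x p⟩ := hp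
  refine (mem_lifts _).2 ⟨q %ₘ minpoly R x, ?_⟩
  rw [map_modByMonic _ (minpoly.monic hx), ← minpoly.isIntegrallyClosed_eq_field_fractions' K hx]
  refine modByMonic_eq_of_dvd_sub (minpoly.monic hx.tower_top) (minpoly.dvd _ _ ?_)
  simp [aeval_map_algebraMap, hq]

section SInt

variable {K F : Type*} [Field K] [Field F] [Algebra K F] {S : Set (Valuation F Zm0)}

theorem mem_SInt_iff {a : F} :
    a ∈ SInt K S ↔ ∀ v : Valuation F Zm0, IsFnPlace K v → v ∉ S → a ∈ v.valuationSubring := by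
  simp [SInt, Subring.mem_iInf]

theorem mem_lifts_SInt_of_forall_valuationSubring {p : F[X]}
    (h : ∀ v : Valuation F Zm0, IsFnPlace K v → v ∉ S →
      p ∈ lifts (algebraMap v.valuationSubring F)) :
    p ∈ lifts (algebraMap (SInt K S) F) := by
  simp only [lifts_iff_coeff_lifts] at h ⊢
  refine fun n => ⟨⟨p.coeff n, mem_SInt_iff.2 fun v hv hvS => ?_⟩, rfl⟩
  obtain ⟨a, ha⟩ := h v hv hvS n
  exact ha ▸ a.2

end SInt

theorem stmt_8_general {K F F' : Type*} [Field K] [Field F] [Field F'] [Algebra K F] [Algebra F F']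
    (S : Set (Valuation F Zm0)) (x : F')
    (hgen : IntermediateField.adjoin F ({x} : Set F') = ⊤)
    (hxint : IsIntegral ↥((SInt K S).map (algebraMap F F' : F →+* F')) x)
    (hloc : ∀ v : Valuation F Zm0, IsFnPlace K v → v ∉ S →
      ∀ z : F',
        IsIntegral ↥(Subring.closure
          ((algebraMap F F' '' (v.valuationSubring : Set F)) ∪ {x})) z →
        z ∈ Subring.closure ((algebraMap F F' '' (v.valuationSubring : Set F)) ∪ {x})) :
    ∀ z : F',
      IsIntegral ↥(Subring.closure ((algebraMap F F' '' (SInt K S : Set F)) ∪ {x})) z →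
      z ∈ Subring.closure ((algebraMap F F' '' (SInt K S : Set F)) ∪ {x}) := by
  intro z hz
  have hxS : IsIntegral (SInt K S) x := isIntegral_of_isIntegral_map hxint
  have hxF : IsIntegral F x := hxS.tower_top
  obtain ⟨p, rfl⟩ : ∃ p : F[X], aeval x p = z := by
    have hz : z ∈ IntermediateField.adjoin F {x} := hgen ▸ IntermediateField.mem_top
    rwa [← IntermediateField.mem_toSubalgebra,
      IntermediateField.adjoin_simple_toSubalgebra_of_isAlgebraic hxF.isAlgebraic,
      Algebra.adjoin_singleton_eq_range_aeval] at hz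
  have hlocal : ∀ v : Valuation F Zm0, IsFnPlace K v → v ∉ S →
      p %ₘ minpoly F x ∈ lifts (algebraMap v.valuationSubring F) := by
    intro v hv hvS
    have hle : SInt K S ≤ v.valuationSubring.toSubring := fun a ha => mem_SInt_iff.1 ha v hv hvS
    refine modByMonic_minpoly_mem_lifts (hxS.of_le_valuationSubring hle) ?_
    rw [← mem_closure_image_union_singleton_iff Subtype.range_coe]
    refine hloc v hv hvS _ (hz.of_subring_le (Subring.closure_mono ?_))
    exact Set.union_subset_union_left _ (Set.image_mono hle)
  obtain ⟨q, hq⟩ := (mem_lifts _).1 (mem_lifts_SInt_of_forall_valuationSubring hlocal)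
  rw [← aeval_modByMonic_eq_self_of_root (minpoly.aeval F x), ← hq, aeval_map_algebraMap,
    mem_closure_image_union_singleton_iff (R := SInt K S) Subtype.range_coe]
  exact aeval_mem_adjoin_singleton _ _

/-- Lemma 6(a): if `O_P[x]` is integrally closed in `F'` for every place
`P ∉ S`, then `O_S[x]` is integrally closed in `F'`. -/
theorem stmt_8 {K F F' : Type*} [Field K] [Field F] [Field F'] [Algebra K F] [Algebra F F']
    [PerfectField K] [FiniteDimensional F F'] [Algebra.IsSeparable F F']
    (hFK : IsAlgFunctionField K F)
    (S : Set (Valuation F Zm0)) (x : F')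
    (hgen : IntermediateField.adjoin F ({x} : Set F') = ⊤)
    (hxint : IsIntegral ↥((SInt K S).map (algebraMap F F' : F →+* F')) x)
    (hloc : ∀ v : Valuation F Zm0, IsFnPlace K v → v ∉ S →
      ∀ z : F',
        IsIntegral ↥(Subring.closure
          ((algebraMap F F' '' (v.valuationSubring : Set F)) ∪ {x})) z →
        z ∈ Subring.closure ((algebraMap F F' '' (v.valuationSubring : Set F)) ∪ {x})) :
    ∀ z : F',
      IsIntegral ↥(Subring.closure ((algebraMap F F' '' (SInt K S : Set F)) ∪ {x})) z →
      z ∈ Subring.closure ((algebraMap F F' '' (SInt K S : Set F)) ∪ {x}) :=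
  stmt_8_general S x hgen hxint hloc
end

section
/- Let O ⊆ O' be an extension of Dedekind domains with O' = integral closure of O in a finite separable extension F'/F of fraction fields, F' = F(x) with x ∈ O'. If the different ideal of O'/O equals the principal ideal of O' generated by f'(x), where f is the minimal polynomial of x over F, then O' = O[x]. -/
/-! The conductor `𝔣` of `O[x]` in `O'` satisfies `𝔣 · 𝔇(O'/O) = (f'(x))`
(`conductor_mul_differentIdeal`), and `f'(x) ≠ 0` by separability. So if `𝔇(O'/O) = (f'(x))`,
cancelling the nonzero principal ideal gives `𝔣 = O'`, i.e. `1 ∈ 𝔣`, i.e. `O' = O[x]`. -/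

open Polynomial

section DifferentIdeal

variable (A K L : Type*) {B : Type*} [CommRing A] [Field K] [CommRing B] [Field L]
  [Algebra A K] [Algebra B L] [Algebra A B] [Algebra K L] [Algebra A L]
  [IsScalarTower A K L] [IsScalarTower A B L] [IsDomain A] [IsFractionRing A K]
  [IsIntegrallyClosed A] [IsIntegralClosure B A L]

lemma algebraMap_aeval_derivative_minpoly [IsDomain B] (x : B) :
    algebraMap B L (aeval x (derivative (minpoly A x))) =
      aeval (algebraMap B L x) (derivative (minpoly K (algebraMap B L x))) := by
  rw [minpoly.isIntegrallyClosed_eq_field_fractions K L (IsIntegralClosure.isIntegral A L x),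
    derivative_map, aeval_map_algebraMap, aeval_algebraMap_apply]

lemma aeval_derivative_minpoly_ne_zero [IsDomain B] [Algebra.IsSeparable K L] (x : B) :
    aeval x (derivative (minpoly A x)) ≠ 0 := by
  intro h
  have h' := algebraMap_aeval_derivative_minpoly A K L x
  rw [h, map_zero] at h'
  exact (Algebra.IsSeparable.isSeparable K _).aeval_derivative_ne_zero (minpoly.aeval K _) h'.symm

lemma adjoin_eq_top_of_differentIdeal_eq_span [FiniteDimensional K L] [Algebra.IsSeparable K L]
    [IsDedekindDomain B] [Module.IsTorsionFree A B] (x : B)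
    (hx : Algebra.adjoin K {algebraMap B L x} = ⊤)
    (hD : differentIdeal A B = Ideal.span {aeval x (derivative (minpoly A x))}) :
    Algebra.adjoin A {x} = ⊤ := by
  refine adjoin_eq_top_of_conductor_eq_top <|
    (Ideal.span_singleton_mul_left_inj (aeval_derivative_minpoly_ne_zero A K L x)).mp ?_
  calc conductor A x * Ideal.span {aeval x (derivative (minpoly A x))}
      _ = conductor A x * differentIdeal A B := by rw [hD]
      _ = Ideal.span {aeval x (derivative (minpoly A x))} := conductor_mul_differentIdeal A K L x hx
      _ = ⊤ * Ideal.span {aeval x (derivative (minpoly A x))} := (Ideal.top_mul _).symm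

end DifferentIdeal

lemma Subalgebra.eq_adjoin_of_adjoin_eq_top {R S : Type*} [CommSemiring R] [Semiring S]
    [Algebra R S] {T : Subalgebra R S} {s : T} (h : Algebra.adjoin R {s} = ⊤) :
    T = Algebra.adjoin R {(s : S)} := by
  simpa [AlgHom.map_adjoin, Algebra.map_top, Subalgebra.range_val, Set.image_singleton] using
    (congrArg (Subalgebra.map T.val) h).symm

/-- criterion used in the paper, cf. Zariski–Samuel V.11.29: if the
different ideal of `O'/O` is the principal ideal generated by `f'(x)`, where `f` is the
minimal polynomial of `x` over `F` and `O'` is the integral closure of the Dedekind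
domain `O` in `F' = F(x)`, then `O' = O[x]`. -/
theorem stmt_18 {A F F' : Type*} [CommRing A] [IsDedekindDomain A] [Field F] [Field F']
    [Algebra A F] [IsFractionRing A F] [Algebra F F'] [FiniteDimensional F F']
    [Algebra.IsSeparable F F'] [Algebra A F'] [IsScalarTower A F F']
    (x : F') (hx : x ∈ integralClosure A F')
    (hgen : IntermediateField.adjoin F ({x} : Set F') = ⊤)
    (hd : Polynomial.aeval x (Polynomial.derivative (minpoly F x)) ∈ integralClosure A F')
    (hD :
      letI : IsDedekindDomain ↥(integralClosure A F') :=
        integralClosure.isDedekindDomain A F F'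
      haveI : Module.IsTorsionFree A ↥(integralClosure A F') :=
        Module.isTorsionFree_iff_algebraMap_injective.mpr (by
          have h : Function.Injective (algebraMap A F') := by
            rw [IsScalarTower.algebraMap_eq A F F']
            exact (algebraMap F F').injective.comp (IsFractionRing.injective A F)
          intro a b hab
          exact h (congrArg Subtype.val hab))
      differentIdeal A ↥(integralClosure A F') =
        Ideal.span {(⟨Polynomial.aeval x (Polynomial.derivative (minpoly F x)), hd⟩ :
          ↥(integralClosure A F'))}) :
    integralClosure A F' = Algebra.adjoin A ({x} : Set F') := by
  let := integralClosure.isDedekindDomain A F F'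
  have : Module.IsTorsionFree A F' := .trans_faithfulSMul A F F'
  set x' : integralClosure A F' := ⟨x, hx⟩
  have hdx : (⟨_, hd⟩ : integralClosure A F') = aeval x' (derivative (minpoly A x')) :=
    Subtype.ext (algebraMap_aeval_derivative_minpoly A F F' x').symm
  rw [hdx] at hD
  have hadj := adjoin_eq_top_of_differentIdeal_eq_span A F F' x'
    (IntermediateField.adjoin_eq_top_iff.mp hgen) hD
  exact Subalgebra.eq_adjoin_of_adjoin_eq_top (s := x') hadj
end
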